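/- arXiv:1908.03415 — 3 statements merged into one kernel-verified Lean document; each statement's English description precedes it below -/
import Mathlib

section
/- The subgroup G = {x ∈ (ℤ/2)^ℕ : supp(x) is thin} is a measurable subset of (ℤ/2)^ℕ and μ(G) = 0, where μ is the Haar probability measure of the compact group (ℤ/2)^ℕ. -/
open Filter Topology Set MeasureTheory

/-- `ℤ/2` carries the discrete topology. -/
instance : TopologicalSpace (ZMod 2) := ⊥

instance : DiscreteTopology (ZMod 2) := ⟨rfl⟩

/-- A set of naturals is *thin* if `|A ∩ {0,…,k-1}|/k → 0` as `k → ∞`. -/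
def Thin (A : Set ℕ) : Prop :=
  Tendsto (fun k : ℕ => ((A ∩ Set.Iio k).ncard : ℝ) / k) atTop (𝓝 0)

/-- The support of an element of `(ℤ/2)^ℕ`. -/
def supp (x : ℕ → ZMod 2) : Set ℕ := {n : ℕ | x n ≠ 0}

/-!
`G` is a measurable subgroup of infinite index: for `i < j` the indicators of the multiples of
`2 ^ i` and of `2 ^ j` differ by an element whose support contains the residue class
`{n | n % 2 ^ j = 2 ^ i}`, which has density `2⁻ʲ`, so these indicators lie in distinct cosets.
Infinitely many disjoint translates of `G`, all of measure `μ G`, fit in a space of finite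
measure only if `μ G = 0`.
-/

open scoped Pointwise Function

@[to_additive]
lemma Subgroup.measure_eq_zero_of_index_eq_zero {G : Type*} [Group G] [MeasurableSpace G]
    [MeasurableMul G] {μ : Measure G} [IsFiniteMeasure μ] [μ.IsMulLeftInvariant]
    {H : Subgroup G} (hH : MeasurableSet (H : Set G)) (hindex : H.index = 0) : μ H = 0 := by
  obtain ⟨S, hS, -⟩ := H.exists_isComplement_left 1
  have : Infinite S :=
    hS.leftQuotientEquiv.infinite_iff.mp (index_eq_zero_iff_infinite.mp hindex)
  let e := Infinite.natEmbedding S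
  have hdisj : Pairwise (Disjoint on fun i => (e i : G) • (H : Set G)) := fun i j hij =>
    hS.pairwiseDisjoint_smul (e i).2 (e j).2 (Subtype.val_injective.ne (e.injective.ne hij))
  by_contra hne
  have htop : μ (⋃ i, (e i : G) • (H : Set G)) = ⊤ := by
    rw [measure_iUnion hdisj fun i => hH.const_smul _]
    simp only [measure_smul]
    exact ENNReal.tsum_const_eq_top_of_ne_zero hne
  exact measure_ne_top μ _ htop

lemma thin_empty : Thin ∅ := by
  simp [Thin]

lemma Thin.mono {A B : Set ℕ} (hB : Thin B) (h : A ⊆ B) : Thin A := by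
  refine squeeze_zero (fun k => by positivity) (fun k => ?_) hB
  have : (B ∩ Iio k).Finite := (finite_Iio k).subset inter_subset_right
  gcongr

lemma Thin.union {A B : Set ℕ} (hA : Thin A) (hB : Thin B) : Thin (A ∪ B) := by
  refine squeeze_zero (fun k => by positivity) (fun k => ?_) (by simpa using hA.add hB)
  rw [← add_div, union_inter_distrib_right]
  gcongr
  exact_mod_cast ncard_union_le _ _

lemma not_thin_setOf_mod_eq {a d : ℕ} (had : a < d) : ¬ Thin {n | n % d = a} := by
  intro h
  have hd : 0 < d := a.zero_le.trans_lt had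
  have hcount : ∀ m : ℕ, m ≤ ({n | n % d = a} ∩ Iio (d * m)).ncard := fun m => by
    have hinj : (fun i => d * i + a).Injective := fun i j hij => by
      simpa [hd.ne'] using hij
    calc m = ((fun i => d * i + a) '' Iio m).ncard := by
          rw [ncard_image_of_injective _ hinj, ncard_Iio_nat]
      _ ≤ _ := by
          refine ncard_le_ncard ?_ ((finite_Iio _).subset inter_subset_right)
          rintro _ ⟨i, hi, rfl⟩
          refine ⟨by simp [Nat.mod_eq_of_lt had], ?_⟩
          simp only [mem_Iio] at hi ⊢
          nlinarith
  have hlim := h.comp (tendsto_id.const_mul_atTop' hd)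
  have : (d : ℝ)⁻¹ ≤ 0 := by
    refine ge_of_tendsto hlim ?_
    filter_upwards [eventually_gt_atTop 0] with m hm
    simp only [Function.comp_apply, id, Nat.cast_mul]
    rw [le_div_iff₀ (by positivity), inv_mul_eq_div, mul_div_cancel_left₀ _ (by positivity)]
    exact_mod_cast hcount m
  exact this.not_gt (by positivity)

lemma supp_add_subset (x y : ℕ → ZMod 2) : supp (x + y) ⊆ supp x ∪ supp y := by
  intro n hn
  by_contra h
  simp_all [supp]

lemma diff_subset_supp_indicator_add (s t : Set ℕ) :
    s \ t ⊆ supp (s.indicator 1 + t.indicator 1) := by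
  rintro n ⟨hs, ht⟩
  simp [supp, hs, ht]

lemma setOf_mod_pow_eq_subset {i j : ℕ} (hij : i < j) :
    {n | n % 2 ^ j = 2 ^ i} ⊆ {n | 2 ^ i ∣ n} \ {n | 2 ^ j ∣ n} := by
  intro n (hn : n % 2 ^ j = 2 ^ i)
  refine ⟨(Nat.dvd_mod_iff (pow_dvd_pow 2 hij.le)).mp (hn ▸ dvd_rfl), fun h => ?_⟩
  rw [Nat.mod_eq_zero_of_dvd h] at hn
  exact (pow_pos two_pos i).ne hn

lemma not_thin_supp_indicator_add {i j : ℕ} (hij : i < j) :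
    ¬ Thin (supp ({n | 2 ^ i ∣ n}.indicator 1 + {n | 2 ^ j ∣ n}.indicator 1)) := fun h =>
  not_thin_setOf_mod_eq (Nat.pow_lt_pow_right one_lt_two hij)
    (h.mono ((setOf_mod_pow_eq_subset hij).trans (diff_subset_supp_indicator_add _ _)))

def thinSuppAddSubgroup : AddSubgroup (ℕ → ZMod 2) where
  carrier := {x | Thin (supp x)}
  add_mem' hx hy := (hx.union hy).mono (supp_add_subset _ _)
  zero_mem' := by simpa [supp] using thin_empty
  neg_mem' {x} (hx : Thin (supp x)) := by
    change Thin (supp (-x))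
    simpa only [supp, Pi.neg_apply, neg_ne_zero] using hx

lemma index_thinSuppAddSubgroup : thinSuppAddSubgroup.index = 0 := by
  rw [AddSubgroup.index_eq_zero_iff_infinite]
  let x (i : ℕ) : ℕ → ZMod 2 := {n | 2 ^ i ∣ n}.indicator 1
  refine Infinite.of_injective (fun i => (x i : _ ⧸ thinSuppAddSubgroup)) fun i j hij => ?_
  have hthin : x j + x i ∈ thinSuppAddSubgroup := by
    simpa [QuotientAddGroup.eq, neg_add_eq_sub, CharTwo.sub_eq_add] using hij
  by_contra hne
  rcases lt_or_gt_of_ne hne with h | h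
  · exact not_thin_supp_indicator_add h (add_comm (x j) (x i) ▸ hthin)
  · exact not_thin_supp_indicator_add h hthin

lemma ncard_supp_inter_Iio (x : ℕ → ZMod 2) (k : ℕ) :
    ((supp x ∩ Iio k).ncard : ℝ) = ∑ n ∈ Finset.range k, if x n = 0 then 0 else 1 := by
  have : supp x ∩ Iio k = ↑({n ∈ Finset.range k | x n ≠ 0}) := by
    ext; simp [supp, and_comm]
  rw [this, ncard_coe_finset, Finset.card_filter]
  push_cast
  simp [ite_not]

lemma measurableSet_thinSuppAddSubgroup [MeasurableSpace (ℕ → ZMod 2)]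
    [OpensMeasurableSpace (ℕ → ZMod 2)] :
    MeasurableSet (thinSuppAddSubgroup : Set (ℕ → ZMod 2)) := by
  refine measurableSet_tendsto _ fun k => Measurable.div_const ?_ _
  simp_rw [ncard_supp_inter_Iio]
  exact (continuous_finsetSum _ fun n _ =>
    (continuous_of_discreteTopology (f := fun z : ZMod 2 => if z = 0 then (0 : ℝ) else 1)).comp
      (continuous_apply n)).measurable

/-- The subgroup `G = {x ∈ (ℤ/2)^ℕ : supp x is thin}` is a measurable subset of
`(ℤ/2)^ℕ` and `μ G = 0` for the Haar probability measure `μ` of the compact group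
`(ℤ/2)^ℕ` (i.e. for the unique translation-invariant Borel probability measure). -/
theorem stmt_4 [MeasurableSpace (ℕ → ZMod 2)] [BorelSpace (ℕ → ZMod 2)]
    (μ : Measure (ℕ → ZMod 2)) [IsProbabilityMeasure μ] [μ.IsAddLeftInvariant] :
    MeasurableSet {x : ℕ → ZMod 2 | Thin (supp x)} ∧
    μ {x : ℕ → ZMod 2 | Thin (supp x)} = 0 := by
  have hmeas := measurableSet_thinSuppAddSubgroup
  exact ⟨hmeas, AddSubgroup.measure_eq_zero_of_index_eq_zero hmeas index_thinSuppAddSubgroup⟩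
end

section
/- Let G be a precompact Hausdorff topological abelian group. Then the dual group G_p^∧ contains a nontrivial convergent sequence if and only if there exists a continuous group homomorphism φ : G → c_0(T) whose image H = φ(G) is separating, i.e., for any two distinct indices m, n ∈ ℕ there is s ∈ H with s_m ≠ s_n, and for every n ∈ ℕ there is s ∈ H with s_n ≠ 1. -/
open Filter Topology Set

/-- The continuous characters of a topological group `G`, as a subset of the product
`Circle ^ G`; the corresponding subtype, with the subspace topology, is the dual group
`G_p^∧` endowed with the topology of pointwise convergence. -/
def pChar (G : Type*) [Group G] [TopologicalSpace G] : Set (G → Circle) :=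
  {χ : G → Circle | Continuous χ ∧ ∀ x y : G, χ (x * y) = χ x * χ y}

/-- A sequence is eventually constant if from some index on all its values coincide. -/
def EventuallyConstant {X : Type*} (f : ℕ → X) : Prop :=
  ∃ N : ℕ, ∀ n : ℕ, N ≤ n → f n = f N

/-- The subgroup `c₀(𝕋)` of `𝕋^ℕ`, consisting of the sequences converging to `1`. -/
def cZero : Set (ℕ → Circle) := {s : ℕ → Circle | Tendsto s atTop (𝓝 1)}

open Function

/-! A nontrivial convergent sequence of characters `χₖ → χ` can be thinned out to an injective
one with `χₖ ≠ χ` for all `k`; then `x ↦ (χₖ x / χ x)ₖ` is a continuous homomorphism into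
`c₀(𝕋)` with separating image. Conversely, the coordinates of such a homomorphism are
characters converging pointwise to the trivial one, pairwise distinct by separation. -/

section Sequences

variable {X : Type*}

lemma eventuallyConstant_of_eventually_eq {f : ℕ → X} {a : X} (h : ∀ᶠ n in atTop, f n = a) :
    EventuallyConstant f := by
  obtain ⟨N, hN⟩ := eventually_atTop.mp h
  exact ⟨N, fun n hn => (hN n hn).trans (hN N le_rfl).symm⟩

lemma Function.Injective.not_eventuallyConstant {f : ℕ → X} (hf : Injective f) :
    ¬ EventuallyConstant f := fun ⟨N, hN⟩ =>
  Nat.succ_ne_self N (hf (hN (N + 1) N.le_succ))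

lemma Filter.Tendsto.cofinite_of_injective_of_range_subset {ι κ : Type*} {f : ι → X}
    {g : κ → X} {l : Filter X} (hf : Tendsto f cofinite l) (hg : Injective g)
    (hgf : range g ⊆ range f) : Tendsto g cofinite l := by
  intro U hU
  refine (((hf hU).image f).preimage hg.injOn).subset fun k hk => ?_
  obtain ⟨n, hn⟩ := hgf (mem_range_self k)
  exact ⟨n, by simpa [hn] using hk, hn⟩

variable [TopologicalSpace X] [T1Space X]

lemma infinite_range_diff_of_not_eventuallyConstant {f : ℕ → X} {a : X}
    (hf : Tendsto f atTop (𝓝 a)) (hne : ¬ EventuallyConstant f) : (range f \ {a}).Infinite := by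
  intro hfin
  refine hne (eventuallyConstant_of_eventually_eq (a := a) ?_)
  have hU : (range f \ {a})ᶜ ∈ 𝓝 a := hfin.isClosed.isOpen_compl.mem_nhds fun h => h.2 rfl
  filter_upwards [hf hU] with n hn
  by_contra h
  exact hn ⟨mem_range_self n, h⟩

lemma exists_injective_tendsto_of_not_eventuallyConstant {f : ℕ → X} {a : X}
    (hf : Tendsto f atTop (𝓝 a)) (hne : ¬ EventuallyConstant f) :
    ∃ g : ℕ → X, Injective g ∧ (∀ k, g k ≠ a) ∧ Tendsto g atTop (𝓝 a) := by
  let e := (infinite_range_diff_of_not_eventuallyConstant hf hne).natEmbedding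
  have hinj : Injective fun k => (e k : X) := fun k l h => e.injective (Subtype.ext h)
  refine ⟨fun k => e k, hinj, fun k => (e k).2.2, ?_⟩
  rw [← Nat.cofinite_eq_atTop] at hf ⊢
  exact hf.cofinite_of_injective_of_range_subset hinj (range_subset_iff.2 fun k => (e k).2.1)

end Sequences

section Characters

variable {G : Type*} [Group G] [TopologicalSpace G]

noncomputable def pChar.toMonoidHom (χ : pChar G) : G →* Circle := MonoidHom.mk' χ χ.2.2

lemma MonoidHom.coe_mem_pChar {ψ : G →* Circle} (hψ : Continuous ψ) : ⇑ψ ∈ pChar G :=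
  ⟨hψ, map_mul ψ⟩

lemma exists_hom_cZero_of_tendsto {χ : ℕ → pChar G} {a : pChar G} (hinj : Injective χ)
    (hne : ∀ k, χ k ≠ a) (hχ : Tendsto χ atTop (𝓝 a)) :
    ∃ φ : G →* (ℕ → Circle), Continuous ⇑φ ∧ range ⇑φ ⊆ cZero ∧
      (∀ m n : ℕ, m ≠ n → ∃ s ∈ range ⇑φ, s m ≠ s n) ∧ (∀ n : ℕ, ∃ s ∈ range ⇑φ, s n ≠ 1) := by
  refine ⟨MonoidHom.pi fun k => pChar.toMonoidHom (χ k) / pChar.toMonoidHom a, ?_, ?_, ?_, ?_⟩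
  · exact continuous_pi fun k => (χ k).2.1.div' a.2.1
  · rintro _ ⟨x, rfl⟩
    have hx : Tendsto (fun k => (χ k : G → Circle) x) atTop (𝓝 ((a : G → Circle) x)) :=
      tendsto_pi_nhds.1 (tendsto_subtype_rng.1 hχ) x
    show Tendsto (fun k => (χ k : G → Circle) x / (a : G → Circle) x) atTop (𝓝 1)
    simpa only [div_self'] using hx.div_const ((a : G → Circle) x)
  · intro m n hmn
    obtain ⟨x, hx⟩ := ne_iff.1 (Subtype.coe_injective.ne (hinj.ne hmn))
    exact ⟨_, mem_range_self x, fun h => hx (div_left_injective h)⟩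
  · intro n
    obtain ⟨x, hx⟩ := ne_iff.1 (Subtype.coe_injective.ne (hne n))
    exact ⟨_, mem_range_self x, fun h => hx (div_eq_one.1 h)⟩

lemma exists_injective_tendsto_of_hom_cZero {φ : G →* (ℕ → Circle)} (hφ : Continuous φ)
    (hrange : range φ ⊆ cZero) (hsep : ∀ m n : ℕ, m ≠ n → ∃ s ∈ range φ, s m ≠ s n) :
    ∃ (f : ℕ → pChar G) (a : pChar G), Tendsto f atTop (𝓝 a) ∧ Injective f := by
  let f : ℕ → pChar G := fun k =>
    ⟨_, ((Pi.evalMonoidHom _ k).comp φ).coe_mem_pChar ((continuous_apply k).comp hφ)⟩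
  refine ⟨f, ⟨_, (1 : G →* Circle).coe_mem_pChar continuous_const⟩, ?_, fun m n h => ?_⟩
  · rw [tendsto_subtype_rng, tendsto_pi_nhds]
    exact fun x => hrange (mem_range_self x)
  · by_contra hmn
    obtain ⟨_, ⟨x, rfl⟩, hx⟩ := hsep m n hmn
    exact hx (congrFun (congrArg Subtype.val h) x)

end Characters

theorem stmt_14_general {G : Type*} [CommGroup G] [UniformSpace G] :
    (∃ (f : ℕ → ↥(pChar G)) (a : ↥(pChar G)),
        Tendsto f atTop (𝓝 a) ∧ ¬ EventuallyConstant f) ↔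
    (∃ φ : G →* (ℕ → Circle), Continuous ⇑φ ∧ Set.range ⇑φ ⊆ cZero ∧
      (∀ m n : ℕ, m ≠ n → ∃ s ∈ Set.range ⇑φ, s m ≠ s n) ∧
      (∀ n : ℕ, ∃ s ∈ Set.range ⇑φ, s n ≠ 1)) := by
  constructor
  · rintro ⟨f, a, hfa, hne⟩
    obtain ⟨χ, hinj, hχa, hχ⟩ := exists_injective_tendsto_of_not_eventuallyConstant hfa hne
    exact exists_hom_cZero_of_tendsto hinj hχa hχ
  · rintro ⟨φ, hφ, hrange, hsep, -⟩
    obtain ⟨f, a, hfa, hinj⟩ := exists_injective_tendsto_of_hom_cZero hφ hrange hsep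
    exact ⟨f, a, hfa, hinj.not_eventuallyConstant⟩

/-- Let `G` be a precompact Hausdorff topological abelian group.  Then the dual group
`G_p^∧` contains a nontrivial convergent sequence if and only if there is a continuous
homomorphism `φ` of `G` into `c₀(𝕋) ⊆ 𝕋^ℕ` whose image `H = φ(G)` is separating: distinct
coordinates are separated by elements of `H`, and for every `n` some `s ∈ H` has
`s n ≠ 1`. -/
theorem stmt_14 {G : Type*} [CommGroup G] [UniformSpace G] [IsUniformGroup G] [T2Space G]
    (hpc : TotallyBounded (Set.univ : Set G)) :
    (∃ (f : ℕ → ↥(pChar G)) (a : ↥(pChar G)),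
        Tendsto f atTop (𝓝 a) ∧ ¬ EventuallyConstant f) ↔
    (∃ φ : G →* (ℕ → Circle), Continuous ⇑φ ∧ Set.range ⇑φ ⊆ cZero ∧
      (∀ m n : ℕ, m ≠ n → ∃ s ∈ Set.range ⇑φ, s m ≠ s n) ∧
      (∀ n : ℕ, ∃ s ∈ Set.range ⇑φ, s n ≠ 1)) :=
  stmt_14_general
end

section
/- Let H be a closed pseudocompact subgroup of a Hausdorff topological abelian group G. If every compact subset of the dual group (G/H)_p^∧ of the quotient group G/H is finite, then every compact subset of the dual group G_p^∧ is finite. -/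
open Filter Topology Set

/-!
Restriction to `H` maps a compact set of characters of `G` onto a compact set of continuous
characters of the pseudocompact group `H`, and such a set `R` is finite. Otherwise take a
sequence of distinct elements of `R` and let `S` be its closure. By Grothendieck's lemma every
pointwise limit of the evaluations `ψ ↦ ψ h` is continuous on `S`, so the closure of these
evaluations is a compact group, metrizable because `S` is separable, and the points of `S` are
distinct continuous characters of it. But distinct characters of a compact group are orthogonal
for Haar measure, so by dominated convergence no sequence of distinct ones converges pointwise,
while a compact metrizable set is sequentially compact. Finally, each fibre of the restriction map,
divided by one of its elements, consists of characters trivial on `H`, i.e. of characters of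
`G ⧸ H`, and is compact, hence finite.
-/

open TopologicalSpace MeasureTheory

def IsPseudocompact (X : Type*) [TopologicalSpace X] : Prop :=
  ∀ f : X → ℝ, Continuous f → ∃ C : ℝ, ∀ x, |f x| ≤ C

theorem IsPseudocompact.not_locallyFinite {X : Type*} [TopologicalSpace X]
    (hX : IsPseudocompact X) {g : ℕ → X → ℝ} (hg : ∀ n, Continuous (g n)) {x : ℕ → X}
    (hx : ∀ n, g n (x n) = 0) {r : ℝ} (hr : 0 < r) :
    ¬LocallyFinite fun n => {y | g n y < r} := by
  intro hlf
  -- `∑ᶠ n, bump n` is continuous by local finiteness but unbounded along `x`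
  set bump : ℕ → X → ℝ := fun n y => n * max 0 (1 - g n y / r)
  have hsupp : ∀ n, Function.support (bump n) ⊆ {y | g n y < r} := by
    intro n y hy
    by_contra hle
    refine hy ?_
    simp only [bump, max_eq_left (sub_nonpos.2 ((one_le_div hr).2 (not_lt.1 hle))), mul_zero]
  have hbump : ∀ n y, 0 ≤ bump n y := fun n y => by positivity
  obtain ⟨C, hC⟩ := hX (fun y => ∑ᶠ n, bump n y)
    (continuous_finsum (fun n => by fun_prop) (hlf.subset hsupp))
  obtain ⟨n, hn⟩ := exists_nat_gt C
  have hfin : Function.HasFiniteSupport fun k => bump k (x n) :=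
    (hlf.point_finite (x n)).subset fun k hk => hsupp k hk
  have : (n : ℝ) ≤ ∑ᶠ k, bump k (x n) :=
    calc (n : ℝ) = bump n (x n) := by simp [bump, hx]
      _ ≤ ∑ᶠ k, bump k (x n) := single_le_finsum n hfin fun k => hbump k (x n)
  linarith [le_abs_self (∑ᶠ k, bump k (x n)), hC (x n)]

theorem exists_seq_of_mem_closure_range_eval {H K Y : Type*} [TopologicalSpace K]
    [PseudoMetricSpace Y] {Φ : K → H → Y} (hΦ : Continuous Φ) {f : K → Y}
    (hf : f ∈ closure (range fun h k => Φ k h)) {k₀ : K} {ε : ℝ}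
    (hfreq : ∃ᶠ k in 𝓝 k₀, ε ≤ dist (f k) (f k₀)) {δ : ℝ} (hδ : 0 < δ) :
    ∃ (h : ℕ → H) (k : ℕ → K),
      (∀ n, dist (Φ k₀ (h n)) (f k₀) < δ ∧ ε ≤ dist (f (k n)) (f k₀)) ∧
      (∀ m n, m < n → dist (Φ (k m) (h n)) (f (k m)) < δ) ∧
      ∀ m n, m ≤ n → dist (Φ (k n) (h m)) (Φ k₀ (h m)) < δ := by
  obtain ⟨a, hP, hr⟩ := exists_seq_of_forall_finset_exists
    (fun a : H × K => dist (Φ k₀ a.1) (f k₀) < δ ∧ dist (Φ a.2 a.1) (Φ k₀ a.1) < δ ∧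
      ε ≤ dist (f a.2) (f k₀))
    (fun a b => dist (Φ a.2 b.1) (f a.2) < δ ∧ dist (Φ b.2 a.1) (Φ k₀ a.1) < δ)
    fun s _ => by
      have hf_near : ∀ κ, ∀ᶠ u in 𝓝 f, dist (u κ) (f κ) < δ := fun κ =>
        Metric.tendsto_nhds.1 ((continuous_apply κ).tendsto f) δ hδ
      obtain ⟨_, ⟨h, rfl⟩, hh₀, hhs⟩ := ((mem_closure_iff_frequently.1 hf).and_eventually
        ((hf_near k₀).and ((eventually_all_finset s).2 fun b _ => hf_near b.2))).exists
      have hk₀_near : ∀ x, ∀ᶠ κ in 𝓝 k₀, dist (Φ κ x) (Φ k₀ x) < δ := fun x =>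
        Metric.tendsto_nhds.1 (((continuous_apply x).comp hΦ).tendsto k₀) δ hδ
      obtain ⟨κ, hκ, hκh, hκs⟩ := (hfreq.and_eventually ((hk₀_near h).and
        ((eventually_all_finset s).2 fun b _ => hk₀_near b.1))).exists
      exact ⟨(h, κ), ⟨hh₀, hκh, hκ⟩, fun b hb => ⟨hhs b hb, hκs b hb⟩⟩
  refine ⟨fun n => (a n).1, fun n => (a n).2, fun n => ⟨(hP n).1, (hP n).2.2⟩,
    fun m n hmn => (hr m n hmn).1, fun m n hmn => ?_⟩
  rcases hmn.eq_or_lt with rfl | hlt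
  exacts [(hP m).2.1, (hr m n hlt).2]

theorem IsPseudocompact.continuous_of_mem_closure_range_eval {H K Y : Type*}
    [TopologicalSpace H] [TopologicalSpace K] [CompactSpace K] [PseudoMetricSpace Y]
    (hH : IsPseudocompact H) {Φ : K → H → Y} (hΦ : Continuous Φ) (hΦc : ∀ k, Continuous (Φ k))
    {f : K → Y} (hf : f ∈ closure (range fun h k => Φ k h)) : Continuous f := by
  refine continuous_iff_continuousAt.2 fun k₀ => ?_
  by_contra hk₀
  obtain ⟨ε, hε, hfreq⟩ : ∃ ε > 0, ∃ᶠ k in 𝓝 k₀, ε ≤ dist (f k) (f k₀) := by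
    simpa [ContinuousAt, Metric.tendsto_nhds, Filter.not_eventually] using hk₀
  set δ := ε / 8 with hδ_def
  have hδ : 0 < δ := by positivity
  obtain ⟨h, k, hk₀h, hkh, hk₀k⟩ := exists_seq_of_mem_closure_range_eval hΦ hf hfreq hδ
  obtain ⟨k', hk'⟩ : ∃ k', MapClusterPt k' atTop k := exists_clusterPt_of_compactSpace _
  have hk'h : ∀ m, dist (Φ k' (h m)) (Φ k₀ (h m)) ≤ δ := fun m =>
    (isClosed_le (((continuous_apply (h m)).comp hΦ).dist continuous_const)
      continuous_const).mem_of_mapClusterPt hk'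
      ((eventually_ge_atTop m).mono fun n hn => (hk₀k m n hn).le)
  set g : ℕ → H → ℝ := fun n y =>
    ∑ i ∈ Finset.range n, dist (Φ (k i) y) (Φ (k i) (h n)) + dist (Φ k' y) (Φ k' (h n))
  have hg : ∀ n, Continuous (g n) := fun n =>
    (continuous_finsetSum _ fun i _ => (hΦc (k i)).dist continuous_const).add
      ((hΦc k').dist continuous_const)
  obtain ⟨c, hc⟩ : ∃ c, ∀ t ∈ 𝓝 c, {n | ({y | g n y < δ} ∩ t).Nonempty}.Infinite := by
    have := hH.not_locallyFinite hg (x := h) (fun n => by simp [g]) hδ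
    unfold LocallyFinite at this
    push Not at this
    exact this
  have hnear : ∀ κ, ∀ᶠ y in 𝓝 c, dist (Φ κ y) (Φ κ c) < δ := fun κ =>
    Metric.tendsto_nhds.1 ((hΦc κ).tendsto c) δ hδ
  obtain ⟨m, hm⟩ : ∃ m, dist (Φ (k m) c) (Φ k' c) < δ :=
    (hk'.frequently (Metric.tendsto_nhds.1 (((continuous_apply c).comp hΦ).tendsto k') δ
      hδ)).exists
  obtain ⟨n, ⟨y, hgy, hym, hyk'⟩, hmn⟩ := (hc _ ((hnear (k m)).and (hnear k'))).exists_gt m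
  have hgy : g n y < δ := hgy
  simp only [g] at hgy
  have hym_n := Finset.single_le_sum
    (fun i _ => dist_nonneg (x := Φ (k i) y) (y := Φ (k i) (h n))) (Finset.mem_range.2 hmn)
  have hyk'_n := dist_nonneg (x := Φ k' y) (y := Φ k' (h n))
  -- f (k m) ≈ Φ (k m) (h n) ≈ Φ (k m) y ≈ Φ (k m) c ≈ Φ k' c ≈ Φ k' y ≈ Φ k' (h n)
  --   ≈ Φ k₀ (h n) ≈ f k₀, each step costing less than δ = ε / 8
  have hclose : dist (f (k m)) (f k₀) < ε := by
    linarith [hgy, hkh m n hmn, hk₀h n, hk'h n, dist_comm (Φ (k m) y) (Φ (k m) (h n)),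
      dist_comm (Φ k' y) (Φ k' c), dist_comm (f (k m)) (Φ (k m) (h n)),
      dist_triangle (f (k m)) (Φ (k m) (h n)) (Φ (k m) y),
      dist_triangle (f (k m)) (Φ (k m) y) (Φ (k m) c),
      dist_triangle (f (k m)) (Φ (k m) c) (Φ k' c),
      dist_triangle (f (k m)) (Φ k' c) (Φ k' y),
      dist_triangle (f (k m)) (Φ k' y) (Φ k' (h n)),
      dist_triangle (f (k m)) (Φ k' (h n)) (Φ k₀ (h n)),
      dist_triangle (f (k m)) (Φ k₀ (h n)) (f k₀)]
  exact (hk₀h m).2.not_gt hclose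

theorem IsCompact.metrizableSpace_of_forall_continuous {X Y : Type*} [TopologicalSpace X]
    [SeparableSpace X] [TopologicalSpace Y] [MetrizableSpace Y]
    {K : Set (X → Y)} (hK : IsCompact K) (hKc : ∀ f ∈ K, Continuous f) :
    MetrizableSpace K := by
  obtain ⟨D, hDc, hD⟩ := exists_countable_dense X
  have := hDc.to_subtype
  have := isCompact_iff_compactSpace.1 hK
  let ρ : K → D → Y := fun f d => f.1 d
  have hρ : Continuous ρ :=
    continuous_pi fun d => (continuous_apply d.1).comp continuous_subtype_val
  have hρinj : Function.Injective ρ := fun f g hfg => Subtype.ext <|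
    Continuous.ext_on hD (hKc f f.2) (hKc g g.2) fun d hd => congrFun hfg ⟨d, hd⟩
  let := metrizableSpaceMetric Y
  let := Encodable.ofCountable D
  let : MetricSpace (D → Y) := PiCountable.metricSpace
  exact (hρ.isClosedEmbedding hρinj).isEmbedding.metrizableSpace

theorem div_mem_pChar {G : Type*} [Group G] [TopologicalSpace G] {χ χ' : G → Circle}
    (hχ : χ ∈ pChar G) (hχ' : χ' ∈ pChar G) : χ / χ' ∈ pChar G :=
  ⟨hχ.1.div' hχ'.1, fun x y => by
    simp only [Pi.div_apply, hχ.2, hχ'.2]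
    exact mul_div_mul_comm _ _ _ _⟩

theorem integral_coe_eq_zero_of_ne_one {N : Type*} [Group N] [MeasurableSpace N]
    [MeasurableMul N] {μ : Measure N} [μ.IsMulLeftInvariant] {κ : N → Circle}
    (hκ : ∀ x y, κ (x * y) = κ x * κ y) {x₀ : N} (hx₀ : κ x₀ ≠ 1) :
    ∫ x, (κ x : ℂ) ∂μ = 0 := by
  have htrans : ∫ x, (κ (x₀ * x) : ℂ) ∂μ = (κ x₀ : ℂ) * ∫ x, (κ x : ℂ) ∂μ := by
    simp only [hκ, Circle.coe_mul, integral_const_mul]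
  rw [integral_mul_left_eq_self (fun x => (κ x : ℂ))] at htrans
  have hx₀' : (κ x₀ : ℂ) ≠ 1 := fun h => hx₀ (Circle.coe_eq_one.1 h)
  exact (mul_left_eq_self₀.1 htrans.symm).resolve_left hx₀'

theorem eventually_eq_one_of_tendsto_one {N : Type*} [Group N] [TopologicalSpace N]
    [IsTopologicalGroup N] [CompactSpace N] {κ : ℕ → N → Circle} (hκ : ∀ n, κ n ∈ pChar N)
    (hlim : Tendsto κ atTop (𝓝 1)) : ∀ᶠ n in atTop, κ n = 1 := by
  borelize N
  let μ := Measure.haarMeasure (⊤ : PositiveCompacts N)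
  have : IsProbabilityMeasure μ :=
    ⟨by simpa [PositiveCompacts.coe_top] using
      Measure.haarMeasure_self (K₀ := (⊤ : PositiveCompacts N))⟩
  have hint : Tendsto (fun n => ∫ x, (κ n x : ℂ) ∂μ) atTop (𝓝 (∫ _, (1 : ℂ) ∂μ)) := by
    refine tendsto_integral_of_dominated_convergence (fun _ => 1)
      (fun n => (continuous_subtype_val.comp (hκ n).1).aestronglyMeasurable)
      (integrable_const 1) (fun n => .of_forall fun x => (Circle.norm_coe _).le)
      (.of_forall fun x => ?_)
    exact (continuous_subtype_val.tendsto _).comp (tendsto_pi_nhds.1 hlim x)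
  rw [integral_const, probReal_univ, one_smul] at hint
  filter_upwards [hint.eventually_ne one_ne_zero] with n hn
  by_contra hne
  obtain ⟨x₀, hx₀⟩ := Function.ne_iff.1 hne
  exact hn (integral_coe_eq_zero_of_ne_one (hκ n).2 hx₀)

theorem IsCompact.finite_of_subset_pChar {N : Type*} [Group N] [TopologicalSpace N]
    [IsTopologicalGroup N] [CompactSpace N] [SeparableSpace N]
    {E : Set (N → Circle)} (hE : IsCompact E) (hEN : E ⊆ pChar N) : E.Finite := by
  by_contra hinf
  have := hE.metrizableSpace_of_forall_continuous fun χ hχ => (hEN hχ).1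
  have := isCompact_iff_compactSpace.1 hE
  have := Set.infinite_coe_iff.2 hinf
  obtain ⟨χ, φ, hφ, hlim⟩ := SeqCompactSpace.tendsto_subseq (Infinite.natEmbedding E)
  have hdiv :
      Tendsto (fun n => (Infinite.natEmbedding E (φ n) : N → Circle) / χ) atTop (𝓝 1) := by
    simpa using ((continuous_subtype_val.tendsto χ).comp hlim).div_const' (χ : N → Circle)
  obtain ⟨n, hn⟩ := eventually_atTop.1 (eventually_eq_one_of_tendsto_one
    (fun n => div_mem_pChar (hEN (Subtype.coe_prop _)) (hEN χ.2)) hdiv)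
  have hsame : Infinite.natEmbedding E (φ n) = Infinite.natEmbedding E (φ (n + 1)) :=
    Subtype.ext ((div_eq_one.1 (hn n le_rfl)).trans (div_eq_one.1 (hn (n + 1) n.le_succ)).symm)
  exact n.succ_ne_self (hφ.injective ((Infinite.natEmbedding E).injective hsame)).symm

theorem IsPseudocompact.finite_of_isCompact_subset_pChar {H : Type*} [Group H]
    [TopologicalSpace H] (hH : IsPseudocompact H) {R : Set (H → Circle)} (hR : IsCompact R)
    (hRH : R ⊆ pChar H) : R.Finite := by
  by_contra hinf
  have := Set.infinite_coe_iff.2 hinf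
  set ψ : ℕ → H → Circle := fun n => Infinite.natEmbedding R n
  have hψ : Function.Injective ψ :=
    Subtype.val_injective.comp (Infinite.natEmbedding R).injective
  set S := closure (range ψ)
  have hSR : S ⊆ R := closure_minimal
    (range_subset_iff.2 fun n => (Infinite.natEmbedding R n).2) hR.isClosed
  have := isCompact_iff_compactSpace.1 (hR.of_isClosed_subset isClosed_closure hSR)
  have : SeparableSpace S :=
    ⟨⟨range fun n => ⟨ψ n, subset_closure (mem_range_self n)⟩, countable_range _,
      Subtype.dense_iff.2 (by rw [← range_comp]; exact subset_rfl)⟩⟩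
  let ev : H →* (S → Circle) := MonoidHom.mk' (fun x χ => χ.1 x) fun x y =>
    funext fun χ => (hRH (hSR χ.2)).2 x y
  set NS := ev.range.topologicalClosure
  have hNS : ∀ u ∈ NS, Continuous u := fun u hu => by
    have hu : u ∈ closure (range ev) := by
      rwa [← MonoidHom.coe_range, ← Subgroup.topologicalClosure_coe]
    exact hH.continuous_of_mem_closure_range_eval continuous_subtype_val
      (fun χ => (hRH (hSR χ.2)).1) hu
  have hNSc : IsCompact (NS : Set (S → Circle)) := ev.range.isClosed_topologicalClosure.isCompact
  have := isCompact_iff_compactSpace.1 hNSc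
  have := hNSc.metrizableSpace_of_forall_continuous hNS
  -- the points of `S` are distinct characters of the compact group `NS`, and by Grothendieck's
  -- lemma they depend continuously on the point
  let D : S → NS → Circle := fun χ u => u.1 χ
  have hD : range D ⊆ pChar NS := by
    rintro _ ⟨χ, rfl⟩
    exact ⟨(continuous_apply χ).comp continuous_subtype_val, fun _ _ => rfl⟩
  have hDinj : Function.Injective D := fun χ χ' h => Subtype.ext <| funext fun x =>
    congrFun h ⟨ev x, Subgroup.le_topologicalClosure _ ⟨x, rfl⟩⟩
  have hDfin : (range D).Finite :=
    (isCompact_range (continuous_pi fun u => hNS u.1 u.2)).finite_of_subset_pChar hD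
  have hSfin : (univ : Set S).Finite :=
    Set.Finite.of_finite_image (by rwa [image_univ]) hDinj.injOn
  exact ((infinite_range_of_injective hψ).mono subset_closure)
    (Set.finite_coe_iff.1 (Set.finite_univ_iff.1 hSfin))

theorem Function.Surjective.isInducing_precomp {ι ι' X : Type*} [TopologicalSpace X]
    {φ : ι' → ι} (hφ : Function.Surjective φ) : IsInducing (· ∘ φ : (ι → X) → (ι' → X)) :=
  ⟨((Pi.induced_precomp φ).trans
    (hφ.iInf_comp fun i => TopologicalSpace.induced (Function.eval i) ‹_›)).symm⟩

theorem comp_subtype_mem_pChar {G : Type*} [Group G] [TopologicalSpace G] {χ : G → Circle}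
    (hχ : χ ∈ pChar G) (H : Subgroup G) : (fun x : H => χ x) ∈ pChar H :=
  ⟨hχ.1.comp continuous_subtype_val, fun x y => hχ.2 x y⟩

theorem exists_pChar_quotient_comp_mk {G : Type*} [Group G] [TopologicalSpace G]
    (N : Subgroup G) [N.Normal] {χ : G → Circle} (hχ : χ ∈ pChar G) (hN : ∀ x ∈ N, χ x = 1) :
    ∃ χ' ∈ pChar (G ⧸ N), χ' ∘ QuotientGroup.mk = χ :=
  ⟨QuotientGroup.lift N (MonoidHom.mk' χ hχ.2) hN,
    ⟨(QuotientGroup.isQuotientMap_mk N).continuous_iff.2 hχ.1, map_mul _⟩, rfl⟩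

theorem finite_of_isCompact_subset_pChar_of_forall_eq_one {G : Type*} [Group G]
    [TopologicalSpace G]
    (N : Subgroup G) [N.Normal] (hq : ∀ K : Set ↥(pChar (G ⧸ N)), IsCompact K → K.Finite)
    {L : Set (G → Circle)} (hL : IsCompact L) (hLG : L ⊆ pChar G)
    (hLN : ∀ χ ∈ L, ∀ x ∈ N, χ x = 1) : L.Finite := by
  let pull : pChar (G ⧸ N) → G → Circle := fun χ => χ.1 ∘ QuotientGroup.mk
  have hpull : IsInducing pull :=
    QuotientGroup.mk_surjective.isInducing_precomp.comp IsInducing.subtypeVal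
  have hLpull : L ⊆ range pull := fun χ hχ =>
    let ⟨χ', hχ', h⟩ := exists_pChar_quotient_comp_mk N (hLG hχ) (hLN χ hχ)
    ⟨⟨χ', hχ'⟩, h⟩
  simpa [image_preimage_eq_of_subset hLpull] using
    (hq _ (hpull.isCompact_preimage' hL hLpull)).image pull

theorem finite_of_isCompact_subset_pChar_of_forall_eq {G : Type*} [Group G]
    [TopologicalSpace G] (N : Subgroup G) [N.Normal]
    (hq : ∀ K : Set ↥(pChar (G ⧸ N)), IsCompact K → K.Finite) {L : Set (G → Circle)}
    (hL : IsCompact L) (hLG : L ⊆ pChar G) {χ₁ : G → Circle} (hχ₁ : χ₁ ∈ pChar G)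
    (hLN : ∀ χ ∈ L, ∀ x ∈ N, χ x = χ₁ x) : L.Finite := by
  refine Set.Finite.of_finite_image (f := (· / χ₁)) ?_ div_left_injective.injOn
  refine finite_of_isCompact_subset_pChar_of_forall_eq_one N hq
    (hL.image (continuous_id.div' continuous_const)) ?_ ?_
  · rintro _ ⟨χ, hχ, rfl⟩
    exact div_mem_pChar (hLG hχ) hχ₁
  · rintro _ ⟨χ, hχ, rfl⟩ x hx
    exact div_eq_one.2 (hLN χ hχ x hx)

theorem stmt_16_general {G : Type*} [CommGroup G] [TopologicalSpace G]
    (H : Subgroup G)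
    (hpsc : ∀ f : ↥H → ℝ, Continuous f → ∃ C : ℝ, ∀ x : ↥H, |f x| ≤ C)
    (hq : ∀ K : Set ↥(pChar (G ⧸ H)), IsCompact K → K.Finite) :
    ∀ K : Set ↥(pChar G), IsCompact K → K.Finite := by
  intro K hK
  set L : Set (G → Circle) := Subtype.val '' K
  have hLG : L ⊆ pChar G := by rintro _ ⟨χ, -, rfl⟩; exact χ.2
  suffices L.Finite from this.of_finite_image Subtype.val_injective.injOn
  have hL : IsCompact L := hK.image continuous_subtype_val
  let res : (G → Circle) → H → Circle := fun χ x => χ x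
  have hres : Continuous res := continuous_pi fun x => continuous_apply _
  have hRfin : (res '' L).Finite :=
    IsPseudocompact.finite_of_isCompact_subset_pChar hpsc (hL.image hres) <| by
      rintro _ ⟨χ, hχ, rfl⟩; exact comp_subtype_mem_pChar (hLG hχ) H
  have hfiber : ∀ ψ ∈ res '' L, (L ∩ res ⁻¹' {ψ}).Finite := by
    rintro _ ⟨χ₁, hχ₁, rfl⟩
    exact finite_of_isCompact_subset_pChar_of_forall_eq H hq
      (hL.inter_right (isClosed_singleton.preimage hres)) (inter_subset_left.trans hLG)
      (hLG hχ₁) fun χ hχ x hx => congrFun hχ.2 ⟨x, hx⟩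
  exact (hRfin.biUnion hfiber).subset fun χ hχ =>
    mem_biUnion (mem_image_of_mem res hχ) ⟨hχ, rfl⟩

/-- Let `H` be a closed pseudocompact subgroup of a Hausdorff topological abelian group
`G`.  If every compact subset of the dual group `(G/H)_p^∧` of the quotient group `G/H`
is finite, then every compact subset of the dual group `G_p^∧` is finite. -/
theorem stmt_16 {G : Type*} [CommGroup G] [TopologicalSpace G] [IsTopologicalGroup G]
    [T2Space G] (H : Subgroup G) (hcl : IsClosed (H : Set G))
    (hpsc : ∀ f : ↥H → ℝ, Continuous f → ∃ C : ℝ, ∀ x : ↥H, |f x| ≤ C)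
    (hq : ∀ K : Set ↥(pChar (G ⧸ H)), IsCompact K → K.Finite) :
    ∀ K : Set ↥(pChar G), IsCompact K → K.Finite :=
  stmt_16_general H hpsc hq
end
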